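/- arXiv:1908.04661 — 2 statements merged into one kernel-verified Lean document; each statement's English description precedes it below -/
import Mathlib

section
/- For every ξ ∈ ℝⁿ, h > 0 and 0 < α < 1/2, the Clifford-vector-valued symbol z_{h,α}(ξ) = Σ_{j=1}^n [ -i e_j (sin((1-α)hξ_j) + sin(αhξ_j))/h + e_{n+j} (cos(αhξ_j) - cos((1-α)hξ_j))/h ] satisfies z_{h,α}(ξ)² = d_h(ξ)²·1, where d_h(ξ)² = (4/h²) Σ_{j=1}^n sin²(hξ_j/2). -/
/-!
The summands `a j = x j • e j + y j • f j` anticommute pairwise, so the square of their sum is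
the sum of their squares, and each `a j ^ 2` is the scalar `y ^ 2 - x ^ 2 = s ^ 2 + c ^ 2`,
because `x = -i s` is imaginary. With `a + b = h * ξ j` this scalar is a rescaled
`(sin a + sin b) ^ 2 + (cos b - cos a) ^ 2 = 2 - 2 cos (a + b) = 4 sin ((a + b) / 2) ^ 2`.
-/

open Finset

theorem Finset.sum_sq_of_anticommute {ι A : Type*} [Semiring A] (s : Finset ι) (a : ι → A)
    (hanti : ∀ j ∈ s, ∀ k ∈ s, j ≠ k → a j * a k + a k * a j = 0) :
    (∑ j ∈ s, a j) ^ 2 = ∑ j ∈ s, a j ^ 2 := by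
  classical
  induction s using Finset.induction_on with
  | empty => simp
  | insert i s hi ih =>
    have hcross : a i * ∑ j ∈ s, a j + (∑ j ∈ s, a j) * a i = 0 := by
      rw [mul_sum, sum_mul, ← sum_add_distrib]
      refine sum_eq_zero fun j hj => hanti i (mem_insert_self i s) j (mem_insert_of_mem hj) ?_
      rintro rfl
      exact hi hj
    rw [sum_insert hi, sum_insert hi,
      ← ih fun j hj k hk => hanti j (mem_insert_of_mem hj) k (mem_insert_of_mem hk)]
    calc (a i + ∑ j ∈ s, a j) ^ 2
        = a i ^ 2 + (a i * ∑ j ∈ s, a j + (∑ j ∈ s, a j) * a i) + (∑ j ∈ s, a j) ^ 2 := by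
          simp only [sq, add_mul, mul_add]; abel
      _ = a i ^ 2 + (∑ j ∈ s, a j) ^ 2 := by rw [hcross, add_zero]

theorem eq_of_add_self_eq_add_self (K : Type*) {M : Type*} [DivisionRing K] [NeZero (2 : K)]
    [AddCommGroup M] [Module K M] {u v : M} (h : u + u = v + v) : u = v := by
  rw [← two_smul K u, ← two_smul K v] at h
  exact smul_right_injective M two_ne_zero h

section SmulAddSmul

variable {R A : Type*} [CommRing R] [Ring A] [Algebra R A]

theorem smul_add_smul_mul_add_mul_smul_add_smul (x y x' y' : R) (u v u' v' : A) :
    (x • u + y • v) * (x' • u' + y' • v') + (x' • u' + y' • v') * (x • u + y • v)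
      = (x * x') • (u * u' + u' * u) + (x * y') • (u * v' + v' * u)
        + (y * x') • (u' * v + v * u') + (y * y') • (v * v' + v' * v) := by
  simp only [add_mul, mul_add, smul_mul_assoc, mul_smul_comm, smul_smul, smul_add]
  module

theorem sq_smul_add_smul_of_anticommute {x y : R} {u v : A} (hu : u ^ 2 = -1) (hv : v ^ 2 = 1)
    (huv : u * v + v * u = 0) : (x • u + y • v) ^ 2 = (y ^ 2 - x ^ 2) • (1 : A) := by
  calc (x • u + y • v) ^ 2 = x ^ 2 • u ^ 2 + y ^ 2 • v ^ 2 + (x * y) • (u * v + v * u) := by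
        simp only [sq, add_mul, mul_add, smul_mul_assoc, mul_smul_comm, smul_smul, smul_add]
        module
    _ = (y ^ 2 - x ^ 2) • (1 : A) := by
        rw [hu, hv, huv, smul_zero, add_zero, sub_smul, smul_neg]; abel

end SmulAddSmul

theorem Real.sin_add_sin_sq_add_cos_sub_cos_sq (a b : ℝ) :
    (Real.sin a + Real.sin b) ^ 2 + (Real.cos b - Real.cos a) ^ 2
      = 4 * Real.sin ((a + b) / 2) ^ 2 := by
  have hhalf : Real.sin ((a + b) / 2) ^ 2 = (1 - Real.cos (a + b)) / 2 := by
    rw [Real.sin_sq_eq_half_sub]; ring_nf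
  rw [hhalf, Real.cos_add]
  nlinarith [Real.sin_sq_add_cos_sq a, Real.sin_sq_add_cos_sq b]

theorem Complex.ofReal_sq_sub_neg_I_mul_ofReal_sq (x y : ℝ) :
    (y : ℂ) ^ 2 - (-Complex.I * x) ^ 2 = ((x ^ 2 + y ^ 2 : ℝ) : ℂ) := by
  push_cast
  linear_combination -(x : ℂ) ^ 2 * Complex.I_sq

theorem clifford_symbol_sq_general {n : ℕ} {A : Type*} [Ring A] [Algebra ℂ A]
    (e f : Fin n → A)
    (hee : ∀ j k, e j * e k + e k * e j = if j = k then (-2 : A) else 0)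
    (hef : ∀ j k, e j * f k + f k * e j = 0)
    (hff : ∀ j k, f j * f k + f k * f j = if j = k then (2 : A) else 0)
    (ξ : Fin n → ℝ) (h α : ℝ) :
    (∑ j, ((-Complex.I * (((Real.sin ((1 - α) * h * ξ j) + Real.sin (α * h * ξ j)) / h : ℝ) : ℂ)) • e j
        + (((Real.cos (α * h * ξ j) - Real.cos ((1 - α) * h * ξ j)) / h : ℝ) : ℂ) • f j)) ^ 2
      = (((4 / h ^ 2 * ∑ j, Real.sin (h * ξ j / 2) ^ 2 : ℝ)) : ℂ) • (1 : A) := by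
  have he_sq (j : Fin n) : e j ^ 2 = -1 :=
    eq_of_add_self_eq_add_self ℂ (by rw [sq, hee, if_pos rfl]; norm_num)
  have hf_sq (j : Fin n) : f j ^ 2 = 1 :=
    eq_of_add_self_eq_add_self ℂ (by rw [sq, hff, if_pos rfl]; norm_num)
  have hcoef (j : Fin n) :
      (((Real.sin ((1 - α) * h * ξ j) + Real.sin (α * h * ξ j)) / h) ^ 2
        + ((Real.cos (α * h * ξ j) - Real.cos ((1 - α) * h * ξ j)) / h) ^ 2)
        = 4 / h ^ 2 * Real.sin (h * ξ j / 2) ^ 2 := by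
    rw [div_pow, div_pow, ← add_div, Real.sin_add_sin_sq_add_cos_sub_cos_sq]
    ring_nf
  rw [Finset.sum_sq_of_anticommute]
  · simp only [sq_smul_add_smul_of_anticommute (he_sq _) (hf_sq _) (hef _ _),
      Complex.ofReal_sq_sub_neg_I_mul_ofReal_sq, hcoef, ← Finset.sum_smul, ← Complex.ofReal_sum,
      Finset.mul_sum]
  · intro j _ k _ hjk
    rw [smul_add_smul_mul_add_mul_smul_add_smul, hee, hef, hef, hff]
    simp [hjk]

/-- In the complexified Clifford algebra `ℂ ⊗ Cℓ_{n,n}`, generated by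
elements `e j` (with `e j e k + e k e j = -2δ_{jk}`), `f j` (with
`f j f k + f k f j = 2δ_{jk}`) and `e j f k + f k e j = 0`, the symbol
`z_{h,α}(ξ) = Σ_j [-i e_j (sin((1-α)hξ_j)+sin(αhξ_j))/h + f_j (cos(αhξ_j)-cos((1-α)hξ_j))/h]`
squares to the scalar `d_h(ξ)² = (4/h²) Σ_j sin²(hξ_j/2)`. -/
theorem clifford_symbol_sq {n : ℕ} {A : Type*} [Ring A] [Algebra ℂ A]
    (e f : Fin n → A)
    (hee : ∀ j k, e j * e k + e k * e j = if j = k then (-2 : A) else 0)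
    (hef : ∀ j k, e j * f k + f k * e j = 0)
    (hff : ∀ j k, f j * f k + f k * f j = if j = k then (2 : A) else 0)
    (ξ : Fin n → ℝ) (h α : ℝ) (hh : 0 < h) (hα0 : 0 < α) (hα : α < 1 / 2) :
    (∑ j, ((-Complex.I * (((Real.sin ((1 - α) * h * ξ j) + Real.sin (α * h * ξ j)) / h : ℝ) : ℂ)) • e j
        + (((Real.cos (α * h * ξ j) - Real.cos ((1 - α) * h * ξ j)) / h : ℝ) : ℂ) • f j)) ^ 2
      = (((4 / h ^ 2 * ∑ j, Real.sin (h * ξ j / 2) ^ 2 : ℝ)) : ℂ) • (1 : A) :=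
  clifford_symbol_sq_general e f hee hef hff ξ h α
end

section
/- Convergence criterion for generalized Wright series (case p = 0, q = 1): the series ₀Ψ₁[ — ; (b, β) | λ ] = Σ_{m≥0} λ^m/(m! Γ(b + β m)) converges absolutely for every λ ∈ ℂ whenever β > -1. -/
/-!
For `β ≥ 0` the points `b + β m` stay in a right half-strip, on which `1 / Γ` is bounded: on a
compact rectangle by continuity, and further right because `|Γ(w + 1)| = |w| |Γ(w)| ≥ |Γ(w)|` once
`Re w ≥ 1`. The series is then dominated by `∑ |λ|^m / m!`.

For `-1 < β < 0` the points `b + β m` move to the left, and the reflection formula bounds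
`|1 / Γ(z)|` by `e^{π |Im z|} Γ(1 - Re z) / π`. Log-convexity of `Γ` gives
`Γ(x + γ) ≤ Γ(x) x^γ` for `γ = -β ∈ (0, 1)`, so `∑ |λ|^m Γ(1 - Re b + γ m) / m!` has term ratio
`O(m^{γ - 1}) → 0` and converges.
-/

open Complex Filter Topology Set
open scoped Nat Real

namespace Real

theorem Gamma_add_le_Gamma_mul_rpow {x t : ℝ} (hx : 0 < x) (ht₀ : 0 ≤ t) (ht₁ : t ≤ 1) :
    Gamma (x + t) ≤ Gamma x * x ^ t := by
  have hΓ := Gamma_pos_of_pos hx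
  have hconv : log (Gamma (x + t)) ≤ (1 - t) * log (Gamma x) + t * log (Gamma (x + 1)) := by
    simpa [show (1 - t) * x + t * (x + 1) = x + t by ring] using
      convexOn_log_Gamma.2 (mem_Ioi.2 hx) (mem_Ioi.2 (by linarith : 0 < x + 1))
        (by linarith : 0 ≤ 1 - t) ht₀ (by ring)
  rw [Gamma_add_one hx.ne', log_mul hx.ne' hΓ.ne'] at hconv
  rw [← log_le_log_iff (Gamma_pos_of_pos (by linarith)) (by positivity),
    log_mul hΓ.ne' (by positivity), log_rpow hx]
  linarith

theorem summable_pow_div_factorial_mul_Gamma (r c : ℝ) {γ : ℝ} (hγ₀ : 0 < γ) (hγ₁ : γ < 1) :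
    Summable (fun m : ℕ => r ^ m / m ! * Gamma (c + γ * m)) := by
  have hpos : ∀ᶠ m : ℕ in atTop, 0 < c + γ * m :=
    (tendsto_atTop_add_const_left _ c
      (tendsto_natCast_atTop_atTop.const_mul_atTop hγ₀)).eventually_gt_atTop 0
  have hle : ∀ᶠ m : ℕ in atTop, c - 1 ≤ (1 - γ) * m :=
    (tendsto_natCast_atTop_atTop.const_mul_atTop (by linarith)).eventually_ge_atTop _
  have hsmall : ∀ᶠ m : ℕ in atTop, |r| * ((m : ℝ) + 1) ^ (γ - 1) ≤ 1 / 2 := by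
    have hlim : Tendsto (fun m : ℕ => |r| * ((m : ℝ) + 1) ^ (γ - 1)) atTop (𝓝 0) := by
      simpa [neg_sub] using ((tendsto_rpow_neg_atTop (by linarith : 0 < 1 - γ)).comp
        (tendsto_atTop_add_const_right _ 1 tendsto_natCast_atTop_atTop)).const_mul |r|
    exact hlim.eventually (ge_mem_nhds (by norm_num))
  refine summable_of_ratio_norm_eventually_le (r := 1 / 2) (by norm_num) ?_
  filter_upwards [hpos, hle, hsmall] with m hpos hle hsmall
  have hm : (0 : ℝ) < m + 1 := by positivity
  have hnorm (k : ℕ) (hk : 0 < c + γ * k) :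
      ‖r ^ k / k ! * Gamma (c + γ * k)‖ = |r| ^ k / k ! * Gamma (c + γ * k) := by
    rw [norm_mul, norm_div, norm_pow, norm_natCast, norm_of_nonneg (Gamma_pos_of_pos hk).le,
      norm_eq_abs]
  rw [hnorm m hpos, hnorm (m + 1) (by push_cast; linarith), Nat.cast_succ,
    show c + γ * ((m : ℝ) + 1) = (c + γ * m) + γ by ring]
  calc |r| ^ (m + 1) / (m + 1)! * Gamma ((c + γ * m) + γ)
      ≤ |r| ^ (m + 1) / (m + 1)! * (Gamma (c + γ * m) * ((m : ℝ) + 1) ^ γ) := by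
        gcongr
        refine (Gamma_add_le_Gamma_mul_rpow hpos hγ₀.le hγ₁.le).trans
          (mul_le_mul_of_nonneg_left ?_ (Gamma_pos_of_pos hpos).le)
        exact rpow_le_rpow hpos.le (by linarith [show (1 - γ) * m = m - γ * m by ring]) hγ₀.le
    _ = |r| * ((m : ℝ) + 1) ^ (γ - 1) * (|r| ^ m / m ! * Gamma (c + γ * m)) := by
        rw [rpow_sub_one hm.ne', Nat.factorial_succ]
        push_cast
        field_simp
        ring
    _ ≤ 1 / 2 * (|r| ^ m / m ! * Gamma (c + γ * m)) := by
        gcongr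

end Real

namespace Complex

theorem norm_Gamma_le_Gamma_re {s : ℂ} (hs : 0 < s.re) : ‖Gamma s‖ ≤ Real.Gamma s.re := by
  rw [Gamma_eq_integral hs, Real.Gamma_eq_integral hs, GammaIntegral]
  refine (MeasureTheory.norm_integral_le_integral_norm _).trans_eq
    (MeasureTheory.setIntegral_congr_fun measurableSet_Ioi fun x hx => ?_)
  simp [norm_cpow_eq_rpow_re_of_pos hx, norm_exp]

theorem norm_sin_le_exp_abs_im (z : ℂ) : ‖sin z‖ ≤ Real.exp |z.im| := by
  have hexp (w : ℂ) (hw : w.re ≤ |z.im|) : ‖exp w‖ ≤ Real.exp |z.im| := by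
    rw [norm_exp]; exact Real.exp_le_exp.2 hw
  rw [sin, norm_div, norm_mul, norm_I, mul_one, norm_ofNat]
  calc ‖exp (-z * I) - exp (z * I)‖ / 2 ≤ (Real.exp |z.im| + Real.exp |z.im|) / 2 := by
        gcongr
        exact (norm_sub_le _ _).trans (add_le_add (hexp _ (by simpa using le_abs_self z.im))
          (hexp _ (by simpa using neg_le_abs z.im)))
    _ = Real.exp |z.im| := by ring

theorem norm_inv_Gamma_le {z : ℂ} (hz : z.re < 1) :
    ‖Gamma z‖⁻¹ ≤ Real.exp (π * |z.im|) * Real.Gamma (1 - z.re) / π := by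
  have hre : 0 < (1 - z).re := by simpa using hz
  by_cases hΓ : Gamma z = 0
  · rw [hΓ, norm_zero, inv_zero]
    have : 0 < Real.Gamma (1 - z.re) := Real.Gamma_pos_of_pos (by linarith)
    positivity
  have hπ : (π : ℂ) ≠ 0 := ofReal_ne_zero.2 Real.pi_ne_zero
  have hrefl := Gamma_mul_Gamma_one_sub z
  have hsin : sin (π * z) ≠ 0 := fun h => by
    rw [h, div_zero] at hrefl
    exact mul_ne_zero hΓ (Gamma_ne_zero_of_re_pos hre) hrefl
  have hinv : (Gamma z)⁻¹ = Gamma (1 - z) * sin (π * z) / π := by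
    rw [eq_div_iff hsin] at hrefl
    refine inv_eq_of_mul_eq_one_right ?_
    rw [← mul_div_assoc, ← mul_assoc, hrefl, div_self hπ]
  have hΓ' : ‖Gamma (1 - z)‖ ≤ Real.Gamma (1 - z.re) := by
    simpa using norm_Gamma_le_Gamma_re hre
  have hsin' : ‖sin (π * z)‖ ≤ Real.exp (π * |z.im|) := by
    simpa [abs_mul, abs_of_pos Real.pi_pos] using norm_sin_le_exp_abs_im (π * z)
  rw [← norm_inv, hinv, norm_div, norm_mul, norm_real, Real.norm_of_nonneg Real.pi_pos.le,
    mul_comm (Real.exp _)]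
  gcongr

theorem norm_Gamma_le_norm_Gamma_add_nat {w : ℂ} (hw : 1 ≤ w.re) (n : ℕ) :
    ‖Gamma w‖ ≤ ‖Gamma (w + n)‖ := by
  induction n with
  | zero => simp
  | succ n ih =>
    have hre : 1 ≤ (w + n).re := by simp; linarith [n.cast_nonneg (α := ℝ)]
    have hne : w + n ≠ 0 := fun h => by rw [h] at hre; norm_num at hre
    rw [Nat.cast_succ, ← add_assoc, Gamma_add_one _ hne, norm_mul]
    exact ih.trans (le_mul_of_one_le_left (norm_nonneg _) (hre.trans (re_le_norm _)))

theorem exists_forall_norm_inv_Gamma_le (a R : ℝ) :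
    ∃ M, ∀ z : ℂ, a ≤ z.re → |z.im| ≤ R → ‖Gamma z‖⁻¹ ≤ M := by
  obtain ⟨M, hM⟩ := (isCompact_Icc.reProdIm isCompact_Icc).exists_bound_of_continuousOn
    (s := Icc (min a 1) 2 ×ℂ Icc (-R) R) differentiable_one_div_Gamma.continuous.continuousOn
  have hrect (w : ℂ) (h₁ : min a 1 ≤ w.re) (h₂ : w.re ≤ 2) (h₃ : |w.im| ≤ R) :
      ‖Gamma w‖⁻¹ ≤ M := by
    simpa using hM w ⟨⟨h₁, h₂⟩, abs_le.1 h₃⟩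
  refine ⟨M, fun z ha hR => ?_⟩
  rcases le_or_gt z.re 2 with h₂ | h₂
  · exact hrect z ((min_le_left _ _).trans ha) h₂ hR
  set n := ⌊z.re - 1⌋₊
  have hn₁ : (n : ℝ) ≤ z.re - 1 := Nat.floor_le (by linarith)
  have hn₂ : z.re - 1 < n + 1 := Nat.lt_floor_add_one _
  have hw : 1 ≤ (z - n).re := by simp; linarith
  calc ‖Gamma z‖⁻¹ = ‖Gamma ((z - n) + n)‖⁻¹ := by rw [sub_add_cancel]
    _ ≤ ‖Gamma (z - n)‖⁻¹ :=
        inv_anti₀ (norm_pos_iff.2 (Gamma_ne_zero_of_re_pos (by linarith)))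
          (norm_Gamma_le_norm_Gamma_add_nat hw n)
    _ ≤ M := hrect _ ((min_le_right _ _).trans hw) (by simp; linarith) (by simpa using hR)

end Complex

/-- the generalized Wright series
`₀Ψ₁[ — ; (b,β) | λ ] = Σ_{m≥0} λ^m/(m! Γ(b+βm))` converges absolutely for every
`λ ∈ ℂ` whenever `β > -1`. -/
theorem wright01_summable (b : ℂ) (β : ℝ) (hβ : β > -1) (lam : ℂ) :
    Summable (fun m : ℕ =>
      ‖lam ^ m / ((Nat.factorial m : ℂ) * Complex.Gamma (b + (β : ℂ) * m))‖) := by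
  have hterm (m : ℕ) : ‖lam ^ m / ((m ! : ℂ) * Gamma (b + (β : ℂ) * m))‖ =
      ‖lam‖ ^ m / m ! * ‖Gamma (b + (β : ℂ) * m)‖⁻¹ := by
    rw [norm_div, norm_mul, norm_pow, norm_natCast, ← div_div, div_eq_mul_inv]
  have hre (m : ℕ) : (b + (β : ℂ) * m).re = b.re + β * m := by simp
  have him (m : ℕ) : (b + (β : ℂ) * m).im = b.im := by simp
  simp_rw [hterm]
  rcases lt_or_ge β 0 with hβ₀ | hβ₀
  · have hlt : ∀ᶠ m : ℕ in atTop, b.re + β * m < 1 :=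
      (tendsto_atBot_add_const_left _ _
        (tendsto_natCast_atTop_atTop.const_mul_atTop_of_neg hβ₀)).eventually_lt_atBot 1
    refine ((Real.summable_pow_div_factorial_mul_Gamma ‖lam‖ (1 - b.re) (neg_pos.2 hβ₀)
      (by linarith)).mul_left (Real.exp (π * |b.im|) / π)).of_norm_bounded_eventually_nat ?_
    filter_upwards [hlt] with m hm
    have hbound := norm_inv_Gamma_le (z := b + (β : ℂ) * m) (by rwa [hre])
    rw [hre, him, show 1 - (b.re + β * m) = 1 - b.re + -β * m by ring] at hbound
    rw [Real.norm_of_nonneg (by positivity)]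
    calc ‖lam‖ ^ m / m ! * ‖Gamma (b + (β : ℂ) * m)‖⁻¹
        ≤ ‖lam‖ ^ m / m ! * (Real.exp (π * |b.im|) * Real.Gamma (1 - b.re + -β * m) / π) := by
          gcongr
      _ = _ := by ring
  · obtain ⟨M, hM⟩ := exists_forall_norm_inv_Gamma_le b.re |b.im|
    refine ((Real.summable_pow_div_factorial ‖lam‖).mul_right M).of_nonneg_of_le
      (fun m => by positivity) fun m => ?_
    gcongr
    exact hM _ (by rw [hre]; exact le_add_of_nonneg_right (by positivity)) (by rw [him])
end
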